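/- arXiv:1411.3668 — 8 statements merged into one kernel-verified Lean document; each statement's English description precedes it below -/
import Mathlib

section
/- Let a₀ : ℝ^d → ℝ^d be a monotone map and F₀ : ℝ^d × ℝ^d → ℝ a convex function such that F₀(p,q) ≥ p·q for all p,q and F₀(p,q) = p·q ⟺ q = a₀(p). Let M be a d×d matrix with p·Mp ≥ 0 for all p. Then the function F(p,q) := F₀(p, q - Mp) + p·Mp is convex, satisfies F(p,q) ≥ p·q for all p,q, and F(p,q) = p·q if and only if q = a₀(p) + Mp. -/
open scoped RealInnerProductSpace

/-- If a convex function `F₀` variationally represents a monotone map `a₀`, and `M` is a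
linear map with nonnegative quadratic form, then `F(p,q) := F₀(p, q - Mp) + p·Mp` is convex,
satisfies `F(p,q) ≥ p·q`, and `F(p,q) = p·q` if and only if `q = a₀(p) + Mp`. -/
theorem stmt4 (d : ℕ)
    (a₀ : EuclideanSpace ℝ (Fin d) → EuclideanSpace ℝ (Fin d))
    (F₀ : EuclideanSpace ℝ (Fin d) → EuclideanSpace ℝ (Fin d) → ℝ)
    (hmono : ∀ p₁ p₂, 0 ≤ ⟪a₀ p₁ - a₀ p₂, p₁ - p₂⟫)
    (hconv : ConvexOn ℝ Set.univ
      (fun pq : EuclideanSpace ℝ (Fin d) × EuclideanSpace ℝ (Fin d) => F₀ pq.1 pq.2))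
    (hge : ∀ p q, ⟪p, q⟫ ≤ F₀ p q)
    (heq : ∀ p q, F₀ p q = ⟪p, q⟫ ↔ q = a₀ p)
    (M : EuclideanSpace ℝ (Fin d) →ₗ[ℝ] EuclideanSpace ℝ (Fin d))
    (hM : ∀ p, 0 ≤ ⟪p, M p⟫) :
    ConvexOn ℝ Set.univ
      (fun pq : EuclideanSpace ℝ (Fin d) × EuclideanSpace ℝ (Fin d) =>
        F₀ pq.1 (pq.2 - M pq.1) + ⟪pq.1, M pq.1⟫) ∧
    (∀ p q, ⟪p, q⟫ ≤ F₀ p (q - M p) + ⟪p, M p⟫) ∧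
    (∀ p q, F₀ p (q - M p) + ⟪p, M p⟫ = ⟪p, q⟫ ↔ q = a₀ p + M p) := by
  refine ⟨⟨convex_univ, ?_⟩, ?_, ?_⟩
  · rintro a - b - t s ht hs hts
    have hF := hconv.2 (Set.mem_univ (a.1, a.2 - M a.1)) (Set.mem_univ (b.1, b.2 - M b.1))
      ht hs hts
    simp only [Prod.smul_mk, Prod.mk_add_mk] at hF
    have hQ : ⟪t • a.1 + s • b.1, M (t • a.1 + s • b.1)⟫ ≤
        t * ⟪a.1, M a.1⟫ + s * ⟪b.1, M b.1⟫ := by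
      have key := hM (a.1 - b.1)
      simp only [map_add, map_smul, map_sub, inner_add_left, inner_add_right, inner_sub_left, inner_sub_right,
        inner_smul_left, inner_smul_right, conj_trivial] at key ⊢
      have hs' : s = 1 - t := by linarith
      subst hs'
      nlinarith [key, mul_nonneg (mul_nonneg ht hs) key]
    have harg : (t • a + s • b).2 - M (t • a + s • b).1 =
        t • (a.2 - M a.1) + s • (b.2 - M b.1) := by
      simp only [Prod.fst_add, Prod.snd_add, Prod.smul_fst, Prod.smul_snd, map_add, map_smul,
        smul_sub]
      abel
    calc F₀ (t • a + s • b).1 ((t • a + s • b).2 - M (t • a + s • b).1)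
          + ⟪(t • a + s • b).1, M (t • a + s • b).1⟫
        = F₀ (t • a.1 + s • b.1) (t • (a.2 - M a.1) + s • (b.2 - M b.1))
          + ⟪t • a.1 + s • b.1, M (t • a.1 + s • b.1)⟫ := by rw [harg]; rfl
      _ ≤ (t * F₀ a.1 (a.2 - M a.1) + s * F₀ b.1 (b.2 - M b.1))
          + (t * ⟪a.1, M a.1⟫ + s * ⟪b.1, M b.1⟫) := add_le_add hF hQ
      _ = t • (F₀ a.1 (a.2 - M a.1) + ⟪a.1, M a.1⟫)
          + s • (F₀ b.1 (b.2 - M b.1) + ⟪b.1, M b.1⟫) := by simp [smul_eq_mul]; ring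
  · intro p q
    have := hge p (q - M p)
    have h2 : ⟪p, q - M p⟫ = ⟪p, q⟫ - ⟪p, M p⟫ := inner_sub_right _ _ _
    linarith
  · intro p q
    have h2 : ⟪p, q - M p⟫ = ⟪p, q⟫ - ⟪p, M p⟫ := inner_sub_right _ _ _
    constructor
    · intro h
      have : F₀ p (q - M p) = ⟪p, q - M p⟫ := by rw [h2]; linarith
      have := (heq p (q - M p)).mp this
      rw [← this]; abel
    · intro h
      have : q - M p = a₀ p := by rw [h]; abel
      have := (heq p (q - M p)).mpr this
      rw [this, h2]; ring
end

section
/- Let A be a symmetric positive definite d×d matrix and M a skew-symmetric d×d matrix. Define F(p,q) := (1/2) p·Ap + (1/2)(q - Mp)·A⁻¹(q - Mp). Then F is convex on ℝ^d × ℝ^d, F(p,q) ≥ p·q for all p, q, and F(p,q) = p·q if and only if q = (A + M)p. -/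
/-!
Since `p ⬝ᵥ M *ᵥ p = 0`, completing the square gives
`F(p, q) = p ⬝ᵥ q + ½ r ⬝ᵥ A⁻¹ *ᵥ r` with `r = q - (A + M) *ᵥ p`; as `A⁻¹` is positive definite,
the correction term is nonnegative and vanishes exactly when `r = 0`. Convexity holds because `F`
is a sum of positive semidefinite quadratic forms composed with linear maps.
-/

open Matrix

namespace Matrix

variable {n R : Type*} [Fintype n]

lemma IsSymm.dotProduct_mulVec_comm [CommSemiring R] {B : Matrix n n R} (hB : B.IsSymm)
    (x y : n → R) : x ⬝ᵥ B *ᵥ y = y ⬝ᵥ B *ᵥ x := by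
  rw [dotProduct_mulVec, ← mulVec_transpose, hB.eq, dotProduct_comm]

lemma dotProduct_mulVec_self_eq_zero_of_transpose_eq_neg [CommRing R] [IsAddTorsionFree R]
    {M : Matrix n n R} (hM : Mᵀ = -M) (x : n → R) : x ⬝ᵥ M *ᵥ x = 0 :=
  self_eq_neg.1 <| calc
    x ⬝ᵥ M *ᵥ x = x ⬝ᵥ Mᵀ *ᵥ x := by
      rw [mulVec_transpose, dotProduct_comm x (x ᵥ* M), ← dotProduct_mulVec]
    _ = -(x ⬝ᵥ M *ᵥ x) := by rw [hM, neg_mulVec, dotProduct_neg]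

lemma PosSemidef.convexOn_dotProduct_mulVec {B : Matrix n n ℝ} (hB : B.PosSemidef) :
    ConvexOn ℝ Set.univ fun x : n → ℝ => x ⬝ᵥ B *ᵥ x := by
  refine ⟨convex_univ, fun x _ y _ a b ha hb hab => ?_⟩
  have hsymm := (isHermitian_iff_isSymm.1 hB.isHermitian).dotProduct_mulVec_comm x y
  have hxy : 0 ≤ (x - y) ⬝ᵥ B *ᵥ (x - y) := by
    simpa only [star_trivial] using hB.dotProduct_mulVec_nonneg (x - y)
  -- `a Q x + (1 - a) Q y - Q (a x + (1 - a) y) = a (1 - a) Q (x - y)`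
  obtain rfl : b = 1 - a := by linarith
  simp only [mulVec_add, mulVec_sub, mulVec_smul, dotProduct_add, dotProduct_sub, add_dotProduct,
    sub_dotProduct, dotProduct_smul, smul_dotProduct, smul_eq_mul, hsymm] at hxy ⊢
  nlinarith [mul_nonneg ha hb]

variable [DecidableEq n]

/-- Ghoussoub's self-dual Lagrangian `φ p + φ* (q - M p)` of `φ p = ½ p ⬝ᵥ A *ᵥ p`, whose convex
conjugate is `φ* u = ½ u ⬝ᵥ A⁻¹ *ᵥ u`. -/
noncomputable def selfDualLagrangian (A M : Matrix n n ℝ) (p q : n → ℝ) : ℝ :=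
  (1 / 2) * (p ⬝ᵥ A *ᵥ p) + (1 / 2) * ((q - M *ᵥ p) ⬝ᵥ A⁻¹ *ᵥ (q - M *ᵥ p))

lemma convexOn_selfDualLagrangian {A : Matrix n n ℝ} (hA : A.PosSemidef) (M : Matrix n n ℝ) :
    ConvexOn ℝ Set.univ fun pq : (n → ℝ) × (n → ℝ) => selfDualLagrangian A M pq.1 pq.2 := by
  have hp := hA.convexOn_dotProduct_mulVec.comp_linearMap (LinearMap.fst ℝ (n → ℝ) (n → ℝ))
  have hu := hA.inv.convexOn_dotProduct_mulVec.comp_linearMap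
    (LinearMap.snd ℝ (n → ℝ) (n → ℝ) - M.mulVecLin ∘ₗ LinearMap.fst ℝ (n → ℝ) (n → ℝ))
  exact (hp.smul (by norm_num : (0 : ℝ) ≤ 1 / 2)).add (hu.smul (by norm_num : (0 : ℝ) ≤ 1 / 2))

lemma selfDualLagrangian_eq {A M : Matrix n n ℝ} (hA : A.IsSymm) (hA' : IsUnit A.det)
    (hM : Mᵀ = -M) (p q : n → ℝ) :
    selfDualLagrangian A M p q =
      p ⬝ᵥ q + (1 / 2) * ((q - (A + M) *ᵥ p) ⬝ᵥ A⁻¹ *ᵥ (q - (A + M) *ᵥ p)) := by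
  have hAinv (v : n → ℝ) : A⁻¹ *ᵥ A *ᵥ v = v := by
    rw [mulVec_mulVec, nonsing_inv_mul _ hA', one_mulVec]
  have hpu : p ⬝ᵥ (q - M *ᵥ p) = p ⬝ᵥ q := by
    rw [dotProduct_sub, dotProduct_mulVec_self_eq_zero_of_transpose_eq_neg hM, sub_zero]
  rw [selfDualLagrangian, add_mulVec, sub_add_eq_sub_sub_swap, ← hpu]
  generalize q - M *ᵥ p = u
  simp only [mulVec_sub, dotProduct_sub, sub_dotProduct, hA.inv.dotProduct_mulVec_comm (A *ᵥ p) u,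
    hAinv, dotProduct_comm u p, dotProduct_comm (A *ᵥ p) p]
  ring

lemma dotProduct_le_selfDualLagrangian {A M : Matrix n n ℝ} (hA : A.PosDef) (hM : Mᵀ = -M)
    (p q : n → ℝ) : p ⬝ᵥ q ≤ selfDualLagrangian A M p q := by
  rw [selfDualLagrangian_eq (isHermitian_iff_isSymm.1 hA.isHermitian)
    ((isUnit_iff_isUnit_det A).1 hA.isUnit) hM]
  have hr := hA.inv.posSemidef.dotProduct_mulVec_nonneg (q - (A + M) *ᵥ p)
  rw [star_trivial] at hr
  linarith

lemma selfDualLagrangian_eq_dotProduct_iff {A M : Matrix n n ℝ} (hA : A.PosDef) (hM : Mᵀ = -M)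
    (p q : n → ℝ) : selfDualLagrangian A M p q = p ⬝ᵥ q ↔ q = (A + M) *ᵥ p := by
  rw [selfDualLagrangian_eq (isHermitian_iff_isSymm.1 hA.isHermitian)
    ((isUnit_iff_isUnit_det A).1 hA.isUnit) hM,
    add_eq_left, mul_eq_zero, or_iff_right (by norm_num), ← sub_eq_zero (a := q)]
  exact ⟨fun h => by_contra fun hne => (hA.inv.dotProduct_mulVec_pos hne).ne' h,
    fun h => by rw [h, zero_dotProduct]⟩

end Matrix

/-- For `A` symmetric positive definite and `M` skew-symmetric, the function
`F(p,q) = (1/2) p·Ap + (1/2)(q - Mp)·A⁻¹(q - Mp)` is convex, satisfies `F(p,q) ≥ p·q`,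
and `F(p,q) = p·q` if and only if `q = (A + M)p`. -/
theorem stmt5 (d : ℕ) (A M : Matrix (Fin d) (Fin d) ℝ)
    (hA : A.PosDef) (hM : Mᵀ = -M) :
    ConvexOn ℝ Set.univ
      (fun pq : (Fin d → ℝ) × (Fin d → ℝ) =>
        (1 / 2) * (pq.1 ⬝ᵥ A.mulVec pq.1) +
          (1 / 2) * ((pq.2 - M.mulVec pq.1) ⬝ᵥ A⁻¹.mulVec (pq.2 - M.mulVec pq.1))) ∧
    (∀ p q : Fin d → ℝ, p ⬝ᵥ q ≤
      (1 / 2) * (p ⬝ᵥ A.mulVec p) +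
        (1 / 2) * ((q - M.mulVec p) ⬝ᵥ A⁻¹.mulVec (q - M.mulVec p))) ∧
    (∀ p q : Fin d → ℝ,
      (1 / 2) * (p ⬝ᵥ A.mulVec p) +
          (1 / 2) * ((q - M.mulVec p) ⬝ᵥ A⁻¹.mulVec (q - M.mulVec p)) = p ⬝ᵥ q ↔
        q = (A + M).mulVec p) :=
  ⟨convexOn_selfDualLagrangian hA.posSemidef M, dotProduct_le_selfDualLagrangian hA hM,
    selfDualLagrangian_eq_dotProduct_iff hA hM⟩
end

section
/- Let a : ℝ^d → ℝ^d be a maximal monotone map (for all p,q: (inf_ξ (a(ξ) - q)·(ξ - p) ≥ 0) ⟺ q = a(p)). Define the Fitzpatrick function F(p,q) := sup_{ξ ∈ ℝ^d} ( q·ξ - a(ξ)·(ξ - p) ). Then F is convex, F(p,q) ≥ p·q for every (p,q), and F(p,q) = p·q if and only if q = a(p). -/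
open scoped RealInnerProductSpace

/-- The Fitzpatrick function `F(p,q) = sup_ξ (q·ξ - a(ξ)·(ξ - p))` of a maximal monotone
map `a` is convex, satisfies `F(p,q) ≥ p·q`, and `F(p,q) = p·q` iff `q = a(p)`. -/
theorem stmt6 (d : ℕ)
    (a : EuclideanSpace ℝ (Fin d) → EuclideanSpace ℝ (Fin d))
    (hmax : ∀ p q, (∀ ξ, 0 ≤ ⟪a ξ - q, ξ - p⟫) ↔ q = a p)
    (F : EuclideanSpace ℝ (Fin d) → EuclideanSpace ℝ (Fin d) → EReal)
    (hF : ∀ p q, F p q =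
      ⨆ ξ : EuclideanSpace ℝ (Fin d), ((⟪q, ξ⟫ - ⟪a ξ, ξ - p⟫ : ℝ) : EReal)) :
    (∀ (p₁ q₁ p₂ q₂ : EuclideanSpace ℝ (Fin d)) (t : ℝ), 0 ≤ t → t ≤ 1 →
      F (t • p₁ + (1 - t) • p₂) (t • q₁ + (1 - t) • q₂) ≤
        ((t : ℝ) : EReal) * F p₁ q₁ + ((1 - t : ℝ) : EReal) * F p₂ q₂) ∧
    (∀ p q, ((⟪p, q⟫ : ℝ) : EReal) ≤ F p q) ∧
    (∀ p q, F p q = ((⟪p, q⟫ : ℝ) : EReal) ↔ q = a p) := by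
  -- key algebraic identity for each term
  have hterm : ∀ p q ξ : EuclideanSpace ℝ (Fin d),
      (⟪q, ξ⟫ - ⟪a ξ, ξ - p⟫ : ℝ) = ⟪p, q⟫ - ⟪a ξ - q, ξ - p⟫ := by
    intro p q ξ
    simp only [inner_sub_left, inner_sub_right, real_inner_comm p q]
    ring
  have hle : ∀ p q, ((⟪p, q⟫ : ℝ) : EReal) ≤ F p q := by
    intro p q
    rw [hF]
    have : ((⟪p, q⟫ : ℝ) : EReal) = ((⟪q, p⟫ - ⟪a p, p - p⟫ : ℝ) : EReal) := by
      rw [sub_self, inner_zero_right, sub_zero, real_inner_comm]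
    rw [this]
    exact le_iSup (fun ξ => ((⟪q, ξ⟫ - ⟪a ξ, ξ - p⟫ : ℝ) : EReal)) p
  refine ⟨?_, hle, ?_⟩
  · intro p₁ q₁ p₂ q₂ t ht0 ht1
    rw [hF]
    apply iSup_le
    intro ξ
    have key : (⟪t • q₁ + (1 - t) • q₂, ξ⟫ - ⟪a ξ, ξ - (t • p₁ + (1 - t) • p₂)⟫ : ℝ)
        = t * (⟪q₁, ξ⟫ - ⟪a ξ, ξ - p₁⟫) + (1 - t) * (⟪q₂, ξ⟫ - ⟪a ξ, ξ - p₂⟫) := by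
      simp only [inner_add_left, inner_add_right, inner_sub_right, real_inner_smul_left,
        real_inner_smul_right]
      ring
    rw [key]
    push_cast
    have h1 : ((t : ℝ) : EReal) * ((⟪q₁, ξ⟫ - ⟪a ξ, ξ - p₁⟫ : ℝ) : EReal)
        ≤ ((t : ℝ) : EReal) * F p₁ q₁ := by
      apply mul_le_mul_of_nonneg_left _ (by exact_mod_cast ht0)
      rw [hF]
      exact le_iSup (fun ξ => ((⟪q₁, ξ⟫ - ⟪a ξ, ξ - p₁⟫ : ℝ) : EReal)) ξ
    have h2 : ((1 - t : ℝ) : EReal) * ((⟪q₂, ξ⟫ - ⟪a ξ, ξ - p₂⟫ : ℝ) : EReal)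
        ≤ ((1 - t : ℝ) : EReal) * F p₂ q₂ := by
      apply mul_le_mul_of_nonneg_left _ (by exact_mod_cast (sub_nonneg.mpr ht1))
      rw [hF]
      exact le_iSup (fun ξ => ((⟪q₂, ξ⟫ - ⟪a ξ, ξ - p₂⟫ : ℝ) : EReal)) ξ
    calc ((t * (⟪q₁, ξ⟫ - ⟪a ξ, ξ - p₁⟫) : ℝ) : EReal)
          + (((1 - t) * (⟪q₂, ξ⟫ - ⟪a ξ, ξ - p₂⟫) : ℝ) : EReal)
        = ((t : ℝ) : EReal) * ((⟪q₁, ξ⟫ - ⟪a ξ, ξ - p₁⟫ : ℝ) : EReal)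
          + ((1 - t : ℝ) : EReal) * ((⟪q₂, ξ⟫ - ⟪a ξ, ξ - p₂⟫ : ℝ) : EReal) := by
          rw [← EReal.coe_mul, ← EReal.coe_mul]
      _ ≤ _ := add_le_add h1 h2
  · intro p q
    constructor
    · intro hFeq
      rw [← hmax p q]
      intro ξ
      have h := le_iSup (fun ξ => ((⟪q, ξ⟫ - ⟪a ξ, ξ - p⟫ : ℝ) : EReal)) ξ
      rw [← hF, hFeq] at h
      have h' : (⟪q, ξ⟫ - ⟪a ξ, ξ - p⟫ : ℝ) ≤ ⟪p, q⟫ := by exact_mod_cast h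
      rw [hterm] at h'
      linarith
    · intro hq
      refine le_antisymm ?_ (hle p q)
      rw [hF]
      apply iSup_le
      intro ξ
      have hmono := (hmax p q).mpr hq ξ
      rw [hterm]
      exact_mod_cast sub_le_self _ hmono
end

section
/- Let a : ℝ^d → ℝ^d be a Lipschitz, uniformly monotone bijection (with constant λ), and let F : ℝ^d × ℝ^d → ℝ ∪ {+∞} be a convex function representing a (i.e. F(p,q) ≥ p·q with equality iff q = a(p)). Define F*(q*,p*) := sup_{p,q} (p·q* + q·p* - F(p,q)). Then F* represents a⁻¹: F*(q,p) ≥ q·p for all (q,p), with equality if and only if p = a⁻¹(q). -/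
/-!
The conjugate satisfies `F*(q, p) ≥ q·p` by testing the supremum at the contact point `(p, a p)`.
If `a p = q`, convexity of `F` together with `F ≥ ⟪·,·⟫` and equality at `(p, q)` forces
`F` to lie above the linearization `(p', q') ↦ p'·q + p·q' - p·q` of the pairing, which is
exactly `F*(q, p) ≤ q·p`. Conversely, `F*(q, p) = q·p` tested at the contact points `(x, a x)`
gives `⟪x - p, a x - q⟫ ≥ 0` for all `x`; at the midpoint of `p` and `a⁻¹ q` this contradicts
strict monotonicity unless `p = a⁻¹ q`.
-/

open Set Filter Topology
open scoped RealInnerProductSpace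

lemma le_of_forall_mem_Ioo_add_mul_le {A K c : ℝ} (h : ∀ t ∈ Ioo (0 : ℝ) 1, A + t * K ≤ c) :
    A ≤ c := by
  have hlim : Tendsto (fun t : ℝ => A + t * K) (𝓝[>] 0) (𝓝 A) := by
    have : Continuous fun t : ℝ => A + t * K := by fun_prop
    simpa using (this.tendsto 0).mono_left nhdsWithin_le_nhds
  exact le_of_tendsto hlim (eventually_of_mem (Ioo_mem_nhdsGT one_pos) h)

section

variable {E : Type*} [NormedAddCommGroup E] [InnerProductSpace ℝ E]

lemma inner_linearization_le_of_forall_mem_Ioo {p q p' q' : E} {c : ℝ}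
    (h : ∀ t ∈ Ioo (0 : ℝ) 1,
      ⟪t • p' + (1 - t) • p, t • q' + (1 - t) • q⟫ ≤ t * c + (1 - t) * ⟪p, q⟫) :
    ⟪p', q⟫ + ⟪p, q'⟫ - ⟪p, q⟫ ≤ c := by
  set A := ⟪p', q⟫ + ⟪p, q'⟫ - ⟪p, q⟫
  refine le_of_forall_mem_Ioo_add_mul_le (K := ⟪p', q'⟫ - A) fun t ht => ?_
  have hexp : ⟪t • p' + (1 - t) • p, t • q' + (1 - t) • q⟫ =
      t * t * ⟪p', q'⟫ + t * (1 - t) * (⟪p', q⟫ + ⟪p, q'⟫) + (1 - t) * (1 - t) * ⟪p, q⟫ := by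
    simp only [inner_add_left, inner_add_right, real_inner_smul_left, real_inner_smul_right]
    ring
  have ht' := h t ht
  rw [hexp] at ht'
  -- after cancelling `(1 - t) * ⟪p, q⟫`, `ht'` reads `t * (A + t * K) ≤ t * c`
  nlinarith [ht.1]

lemma inner_linearization_le_of_convex {F : E → E → EReal}
    (hconv : ∀ (p₁ q₁ p₂ q₂ : E) (t : ℝ), 0 ≤ t → t ≤ 1 →
      F (t • p₁ + (1 - t) • p₂) (t • q₁ + (1 - t) • q₂) ≤
        ((t : ℝ) : EReal) * F p₁ q₁ + ((1 - t : ℝ) : EReal) * F p₂ q₂)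
    (hge : ∀ p q, ((⟪p, q⟫ : ℝ) : EReal) ≤ F p q) {p q : E}
    (hpq : F p q = ((⟪p, q⟫ : ℝ) : EReal)) (p' q' : E) :
    ((⟪p', q⟫ + ⟪p, q'⟫ - ⟪p, q⟫ : ℝ) : EReal) ≤ F p' q' := by
  rcases eq_or_ne (F p' q') ⊤ with htop | htop
  · simp [htop]
  have hbot : F p' q' ≠ ⊥ := ((EReal.bot_lt_coe _).trans_le (hge p' q')).ne'
  rw [← EReal.coe_toReal htop hbot, EReal.coe_le_coe_iff]
  refine inner_linearization_le_of_forall_mem_Ioo fun t ht => ?_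
  have h := (hge _ _).trans (hconv p' q' p q t ht.1.le ht.2.le)
  rwa [hpq, ← EReal.coe_toReal htop hbot, ← EReal.coe_mul, ← EReal.coe_mul, ← EReal.coe_add,
    EReal.coe_le_coe_iff] at h

/-- The Legendre–Fenchel transform of `F`, for the pairing `(p, q)·(q*, p*) = p·q* + q·p*`. -/
noncomputable def fenchelDual (F : E → E → EReal) (qs ps : E) : EReal :=
  ⨆ p : E, ⨆ q : E, (((⟪p, qs⟫ + ⟪q, ps⟫ : ℝ) : EReal) - F p q)

lemma le_fenchelDual (F : E → E → EReal) (p q qs ps : E) :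
    ((⟪p, qs⟫ + ⟪q, ps⟫ : ℝ) : EReal) - F p q ≤ fenchelDual F qs ps :=
  le_iSup₂_of_le (f := fun p q => ((⟪p, qs⟫ + ⟪q, ps⟫ : ℝ) : EReal) - F p q) p q le_rfl

lemma inner_le_fenchelDual {F : E → E → EReal} {p q' : E} (h : F p q' = ((⟪p, q'⟫ : ℝ) : EReal))
    (q : E) : ((⟪q, p⟫ : ℝ) : EReal) ≤ fenchelDual F q p := by
  refine le_of_eq_of_le ?_ (le_fenchelDual F p q' q p)
  rw [h, ← EReal.coe_sub, EReal.coe_eq_coe_iff, real_inner_comm q p, real_inner_comm q' p]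
  ring

lemma fenchelDual_le_inner_of_convex {F : E → E → EReal}
    (hconv : ∀ (p₁ q₁ p₂ q₂ : E) (t : ℝ), 0 ≤ t → t ≤ 1 →
      F (t • p₁ + (1 - t) • p₂) (t • q₁ + (1 - t) • q₂) ≤
        ((t : ℝ) : EReal) * F p₁ q₁ + ((1 - t : ℝ) : EReal) * F p₂ q₂)
    (hge : ∀ p q, ((⟪p, q⟫ : ℝ) : EReal) ≤ F p q) {p q : E}
    (hpq : F p q = ((⟪p, q⟫ : ℝ) : EReal)) :
    fenchelDual F q p ≤ ((⟪q, p⟫ : ℝ) : EReal) := by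
  refine iSup₂_le fun p' q' => ?_
  have hbot : F p' q' ≠ ⊥ := ((EReal.bot_lt_coe _).trans_le (hge p' q')).ne'
  rw [EReal.sub_le_iff_le_add (Or.inl hbot) (Or.inr (EReal.coe_ne_bot _))]
  calc ((⟪p', q⟫ + ⟪q', p⟫ : ℝ) : EReal)
      = ((⟪q, p⟫ : ℝ) : EReal) + ((⟪p', q⟫ + ⟪p, q'⟫ - ⟪p, q⟫ : ℝ) : EReal) := by
        rw [← EReal.coe_add, EReal.coe_eq_coe_iff, real_inner_comm q' p, real_inner_comm q p]
        ring
    _ ≤ ((⟪q, p⟫ : ℝ) : EReal) + F p' q' :=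
        add_le_add_right (inner_linearization_le_of_convex hconv hge hpq p' q') _

lemma inner_sub_nonneg_of_fenchelDual_eq {F : E → E → EReal} {q p : E}
    (h : fenchelDual F q p = ((⟪q, p⟫ : ℝ) : EReal)) {p' q' : E}
    (h' : F p' q' = ((⟪p', q'⟫ : ℝ) : EReal)) : 0 ≤ ⟪p' - p, q' - q⟫ := by
  have hle := le_fenchelDual F p' q' q p
  rw [h, h', ← EReal.coe_sub, EReal.coe_le_coe_iff] at hle
  simp only [inner_sub_left, inner_sub_right]
  rw [real_inner_comm p q', real_inner_comm p q] at hle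
  linarith

/-- Testing at the midpoint `m` of `p` and `r` works because `m - p = r - m`. -/
lemma eq_of_forall_inner_sub_nonneg {a : E → E}
    (hstrict : ∀ x y, x ≠ y → 0 < ⟪a x - a y, x - y⟫) {p r : E}
    (h : ∀ x, 0 ≤ ⟪x - p, a x - a r⟫) : p = r := by
  by_contra hpr
  set m := midpoint ℝ p r
  have hmr : m ≠ r := by simpa [m] using hpr
  have hmp : m - p = -(m - r) := by
    rw [midpoint_sub_left, midpoint_sub_right, ← smul_neg, neg_sub]
  have := h m
  rw [hmp, inner_neg_left, real_inner_comm] at this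
  linarith [hstrict m r hmr]

end

theorem stmt7_general (d : ℕ) (lam : ℝ) (hlam : 1 ≤ lam)
    (a : EuclideanSpace ℝ (Fin d) → EuclideanSpace ℝ (Fin d))
    (hbij : Function.Bijective a)
    (hMono : ∀ p₁ p₂, (1 / lam) * ‖p₁ - p₂‖ ^ 2 ≤ ⟪a p₁ - a p₂, p₁ - p₂⟫)
    (F : EuclideanSpace ℝ (Fin d) → EuclideanSpace ℝ (Fin d) → EReal)
    (hconv : ∀ (p₁ q₁ p₂ q₂ : EuclideanSpace ℝ (Fin d)) (t : ℝ), 0 ≤ t → t ≤ 1 →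
      F (t • p₁ + (1 - t) • p₂) (t • q₁ + (1 - t) • q₂) ≤
        ((t : ℝ) : EReal) * F p₁ q₁ + ((1 - t : ℝ) : EReal) * F p₂ q₂)
    (hge : ∀ p q, ((⟪p, q⟫ : ℝ) : EReal) ≤ F p q)
    (heq : ∀ p q, F p q = ((⟪p, q⟫ : ℝ) : EReal) ↔ q = a p)
    (Fstar : EuclideanSpace ℝ (Fin d) → EuclideanSpace ℝ (Fin d) → EReal)
    (hFstar : ∀ qs ps, Fstar qs ps =
      ⨆ p : EuclideanSpace ℝ (Fin d), ⨆ q : EuclideanSpace ℝ (Fin d),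
        (((⟪p, qs⟫ + ⟪q, ps⟫ : ℝ) : EReal) - F p q)) :
    (∀ q p, ((⟪q, p⟫ : ℝ) : EReal) ≤ Fstar q p) ∧
    (∀ q p, Fstar q p = ((⟪q, p⟫ : ℝ) : EReal) ↔ p = Function.invFun a q) := by
  obtain rfl : Fstar = fenchelDual F := funext fun qs => funext fun ps => hFstar qs ps
  have hcontact : ∀ p, F p (a p) = ((⟪p, a p⟫ : ℝ) : EReal) := fun p => (heq p _).2 rfl
  have hinv : ∀ q, a (Function.invFun a q) = q := Function.rightInverse_invFun hbij.2
  have hstrict : ∀ x y, x ≠ y → 0 < ⟪a x - a y, x - y⟫ := fun x y hxy =>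
    (mul_pos (one_div_pos.2 (zero_lt_one.trans_le hlam))
      (pow_pos (norm_pos_iff.2 (sub_ne_zero.2 hxy)) 2)).trans_le (hMono x y)
  refine ⟨fun q p => inner_le_fenchelDual (hcontact p) q, fun q p => ⟨fun h => ?_, ?_⟩⟩
  · refine eq_of_forall_inner_sub_nonneg hstrict fun x => ?_
    rw [hinv]
    exact inner_sub_nonneg_of_fenchelDual_eq h (hcontact x)
  · rintro rfl
    exact le_antisymm (fenchelDual_le_inner_of_convex hconv hge ((heq _ _).2 (hinv q).symm))
      (inner_le_fenchelDual (hcontact _) q)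

/-- If a convex function `F` variationally represents a Lipschitz, uniformly monotone
bijection `a`, then its Legendre–Fenchel transform `F*(q*,p*) = sup_{p,q}(p·q* + q·p* - F(p,q))`
represents the inverse map `a⁻¹`. -/
theorem stmt7 (d : ℕ) (lam : ℝ) (hlam : 1 ≤ lam)
    (a : EuclideanSpace ℝ (Fin d) → EuclideanSpace ℝ (Fin d))
    (hbij : Function.Bijective a)
    (hLip : ∀ p₁ p₂, ‖a p₁ - a p₂‖ ≤ lam * ‖p₁ - p₂‖)
    (hMono : ∀ p₁ p₂, (1 / lam) * ‖p₁ - p₂‖ ^ 2 ≤ ⟪a p₁ - a p₂, p₁ - p₂⟫)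
    (F : EuclideanSpace ℝ (Fin d) → EuclideanSpace ℝ (Fin d) → EReal)
    (hconv : ∀ (p₁ q₁ p₂ q₂ : EuclideanSpace ℝ (Fin d)) (t : ℝ), 0 ≤ t → t ≤ 1 →
      F (t • p₁ + (1 - t) • p₂) (t • q₁ + (1 - t) • q₂) ≤
        ((t : ℝ) : EReal) * F p₁ q₁ + ((1 - t : ℝ) : EReal) * F p₂ q₂)
    (hge : ∀ p q, ((⟪p, q⟫ : ℝ) : EReal) ≤ F p q)
    (heq : ∀ p q, F p q = ((⟪p, q⟫ : ℝ) : EReal) ↔ q = a p)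
    (Fstar : EuclideanSpace ℝ (Fin d) → EuclideanSpace ℝ (Fin d) → EReal)
    (hFstar : ∀ qs ps, Fstar qs ps =
      ⨆ p : EuclideanSpace ℝ (Fin d), ⨆ q : EuclideanSpace ℝ (Fin d),
        (((⟪p, qs⟫ + ⟪q, ps⟫ : ℝ) : EReal) - F p q)) :
    (∀ q p, ((⟪q, p⟫ : ℝ) : EReal) ≤ Fstar q p) ∧
    (∀ q p, Fstar q p = ((⟪q, p⟫ : ℝ) : EReal) ↔ p = Function.invFun a q) :=
  stmt7_general d lam hlam a hbij hMono F hconv hge heq Fstar hFstar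
end

section
/- Suppose F : ℝ^d × ℝ^d → ℝ satisfies: (p,q) ↦ F(p,q) - (1/(2Λ))(|p|² + |q|²) is convex for some Λ ≥ 1, and for every p ∈ ℝ^d, inf_{q ∈ ℝ^d} (F(p,q) - p·q) = 0. Let a(p) denote the unique point where this infimum is attained. Then for all p₁, p₂ ∈ ℝ^d: (1/(4Λ))(|p₁ - p₂|² + |a(p₁) - a(p₂)|²) ≤ (a(p₁) - a(p₂))·(p₁ - p₂). In particular a is uniformly monotone with constant 4Λ and Lipschitz with constant 2Λ. -/
open scoped RealInnerProductSpace

lemma midnorm {E : Type*} [NormedAddCommGroup E] [InnerProductSpace ℝ E] (x y : E) :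
    ‖(1/2:ℝ)•x + (1/2:ℝ)•y‖^2 = ‖x‖^2/2 + ‖y‖^2/2 - ‖x - y‖^2/4 := by
  have h : (1/2:ℝ)•x + (1/2:ℝ)•y = (1/2:ℝ)•(x+y) := by module
  have h1 := norm_add_sq_real x y
  have h2 := norm_sub_sq_real x y
  rw [h, norm_smul, mul_pow, h1]
  rw [h2]
  norm_num
  ring

lemma midinner {E : Type*} [NormedAddCommGroup E] [InnerProductSpace ℝ E] (x₁ x₂ y₁ y₂ : E) :
    ⟪(1/2:ℝ)•x₁+(1/2:ℝ)•x₂, (1/2:ℝ)•y₁+(1/2:ℝ)•y₂⟫ =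
      (⟪x₁,y₁⟫+⟪x₁,y₂⟫+⟪x₂,y₁⟫+⟪x₂,y₂⟫)/4 := by
  simp [inner_add_left, inner_add_right, real_inner_smul_left, real_inner_smul_right]
  ring

lemma lip_aux (Λ A B I : ℝ) (hΛ0 : 0 < Λ) (hA : 0 ≤ A) (hB : 0 ≤ B)
    (hkey : (1/(2*Λ)) * (B^2 + A^2) ≤ I) (hcs : I ≤ A*B) : A ≤ 2*Λ*B := by
  have h2 : A^2 ≤ 2*Λ*(A*B) := by
    have e : 2*Λ*(1/(2*Λ)*(B^2+A^2)) = B^2+A^2 := by field_simp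
    have h' := mul_le_mul_of_nonneg_left (hkey.trans hcs) (by positivity : (0:ℝ) ≤ 2*Λ)
    rw [e] at h'
    nlinarith [sq_nonneg B]
  rcases hA.eq_or_lt with h|h
  · rw [← h]; positivity
  · nlinarith

/-- If `F(p,q) - (1/(2Λ))(|p|²+|q|²)` is convex and `inf_q (F(p,q) - p·q) = 0` for every `p`,
with `a(p)` the point attaining the infimum, then
`(1/(4Λ))(|p₁-p₂|² + |a(p₁)-a(p₂)|²) ≤ (a(p₁)-a(p₂))·(p₁-p₂)`; in particular `a` is
uniformly monotone with constant `4Λ` and Lipschitz with constant `2Λ`. -/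
theorem stmt8 (d : ℕ) (Λ : ℝ) (hΛ : 1 ≤ Λ)
    (F : EuclideanSpace ℝ (Fin d) → EuclideanSpace ℝ (Fin d) → ℝ)
    (a : EuclideanSpace ℝ (Fin d) → EuclideanSpace ℝ (Fin d))
    (hconv : ConvexOn ℝ Set.univ
      (fun pq : EuclideanSpace ℝ (Fin d) × EuclideanSpace ℝ (Fin d) =>
        F pq.1 pq.2 - (1 / (2 * Λ)) * (‖pq.1‖ ^ 2 + ‖pq.2‖ ^ 2)))
    (hinf : ∀ p, IsGLB {y : ℝ | ∃ q, y = F p q - ⟪p, q⟫} 0)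
    (ha : ∀ p, F p (a p) = ⟪p, a p⟫) :
    ∀ p₁ p₂,
      (1 / (4 * Λ)) * (‖p₁ - p₂‖ ^ 2 + ‖a p₁ - a p₂‖ ^ 2) ≤ ⟪a p₁ - a p₂, p₁ - p₂⟫ ∧
      (1 / (4 * Λ)) * ‖p₁ - p₂‖ ^ 2 ≤ ⟪a p₁ - a p₂, p₁ - p₂⟫ ∧
      ‖a p₁ - a p₂‖ ≤ 2 * Λ * ‖p₁ - p₂‖ := by
  intro p₁ p₂
  have hΛ0 : (0:ℝ) < Λ := lt_of_lt_of_le one_pos hΛ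
  set P : EuclideanSpace ℝ (Fin d) := (1/2:ℝ)•p₁ + (1/2:ℝ)•p₂ with hP
  set Q : EuclideanSpace ℝ (Fin d) := (1/2:ℝ)•(a p₁) + (1/2:ℝ)•(a p₂) with hQ
  have hc := hconv.2 (Set.mem_univ (p₁, a p₁)) (Set.mem_univ (p₂, a p₂))
      (by norm_num : (0:ℝ) ≤ 1/2) (by norm_num : (0:ℝ) ≤ 1/2) (by norm_num)
  have hpair : ((1/2:ℝ)•(p₁, a p₁) + (1/2:ℝ)•(p₂, a p₂) :
      EuclideanSpace ℝ (Fin d) × EuclideanSpace ℝ (Fin d)) = (P, Q) := rfl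
  rw [hpair] at hc
  simp only [smul_eq_mul] at hc
  have hlb : (0:ℝ) ≤ F P Q - ⟪P, Q⟫ := (hinf P).1 ⟨Q, rfl⟩
  have n1 : ‖P‖^2 = ‖p₁‖^2/2 + ‖p₂‖^2/2 - ‖p₁ - p₂‖^2/4 := midnorm p₁ p₂
  have n2 : ‖Q‖^2 = ‖a p₁‖^2/2 + ‖a p₂‖^2/2 - ‖a p₁ - a p₂‖^2/4 := midnorm (a p₁) (a p₂)
  have i1 : ⟪P, Q⟫ = (⟪p₁,a p₁⟫+⟪p₁,a p₂⟫+⟪p₂,a p₁⟫+⟪p₂,a p₂⟫)/4 :=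
    midinner p₁ p₂ (a p₁) (a p₂)
  have i2 : ⟪a p₁ - a p₂, p₁ - p₂⟫ =
      ⟪p₁,a p₁⟫ - ⟪p₁,a p₂⟫ - ⟪p₂,a p₁⟫ + ⟪p₂,a p₂⟫ := by
    rw [inner_sub_left, inner_sub_right, inner_sub_right, real_inner_comm (a p₁) p₁,
      real_inner_comm (a p₁) p₂, real_inner_comm (a p₂) p₁, real_inner_comm (a p₂) p₂]
    ring
  have hkey : (1/(2*Λ)) * (‖p₁ - p₂‖^2 + ‖a p₁ - a p₂‖^2) ≤ ⟪a p₁ - a p₂, p₁ - p₂⟫ := by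
    have e1 := ha p₁
    have e2 := ha p₂
    rw [n1, n2] at hc
    rw [i1] at hlb
    rw [i2]
    linarith [hc, hlb]
  have hhalf : (1/(4*Λ)) = (1/(2*Λ))/2 := by
    field_simp
    ring
  have hA : (0:ℝ) ≤ ‖a p₁ - a p₂‖^2 := sq_nonneg _
  have hB : (0:ℝ) ≤ ‖p₁ - p₂‖^2 := sq_nonneg _
  have hcpos : (0:ℝ) < 1/(2*Λ) := by positivity
  refine ⟨?_, ?_, ?_⟩
  · rw [hhalf]; nlinarith
  · rw [hhalf]; nlinarith
  · exact lip_aux Λ _ _ _ hΛ0 (norm_nonneg _) (norm_nonneg _) hkey (real_inner_le_norm _ _)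
end

section
/- Let F : ℝ^d × ℝ^d → ℝ be such that (p,q) ↦ F(p,q) - (1/(2Λ))(|p|²+|q|²) is convex and (p,q) ↦ F(p,q) - (Λ/2)(|p|²+|q|²) is concave (so ∇F exists and is Λ-Lipschitz and (1/Λ)-uniformly monotone). Suppose F represents a monotone map a : ℝ^d → ℝ^d, i.e. F(p,q) ≥ p·q with equality iff q = a(p). Then there exist constants C, c > 0 depending only on Λ such that -C|a(0)|² ≤ inf_{p,q ∈ ℝ^d} F(p,q) ≤ -c|a(0)|². -/
open scoped RealInnerProductSpace

set_option maxHeartbeats 1000000 in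
/-- If `F` is uniformly convex and `C^{1,1}` (constant `Λ`) and variationally represents a
monotone map `a`, then there are constants `C, c > 0` depending only on `Λ` with
`-C|a(0)|² ≤ inf F ≤ -c|a(0)|²`. -/
theorem stmt9 (Λ : ℝ) (hΛ : 1 ≤ Λ) :
    ∃ C > (0 : ℝ), ∃ c > (0 : ℝ),
      ∀ (d : ℕ) (F : EuclideanSpace ℝ (Fin d) → EuclideanSpace ℝ (Fin d) → ℝ)
        (a : EuclideanSpace ℝ (Fin d) → EuclideanSpace ℝ (Fin d)),
        ConvexOn ℝ Set.univ
          (fun pq : EuclideanSpace ℝ (Fin d) × EuclideanSpace ℝ (Fin d) =>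
            F pq.1 pq.2 - (1 / (2 * Λ)) * (‖pq.1‖ ^ 2 + ‖pq.2‖ ^ 2)) →
        ConcaveOn ℝ Set.univ
          (fun pq : EuclideanSpace ℝ (Fin d) × EuclideanSpace ℝ (Fin d) =>
            F pq.1 pq.2 - (Λ / 2) * (‖pq.1‖ ^ 2 + ‖pq.2‖ ^ 2)) →
        (∀ p q, ⟪p, q⟫ ≤ F p q) →
        (∀ p q, F p q = ⟪p, q⟫ ↔ q = a p) →
        ∀ m : ℝ, IsGLB {y : ℝ | ∃ p q, y = F p q} m →
          -C * ‖a 0‖ ^ 2 ≤ m ∧ m ≤ -c * ‖a 0‖ ^ 2 := by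
  have hΛ0 : (0:ℝ) < Λ := by linarith
  refine ⟨4 * Λ, by linarith, 1 / (4 * Λ), by positivity, ?_⟩
  intro d F a hconv hconc hle heq m hm
  obtain ⟨q0, hq0⟩ : ∃ q0, q0 = a 0 := ⟨_, rfl⟩
  rw [← hq0]
  have hF0 : F 0 q0 = 0 := by
    have h := (heq 0 q0).2 hq0
    rw [h, inner_zero_left]
  have hN : (0:ℝ) ≤ ‖q0‖ ^ 2 := by positivity
  obtain ⟨t, ht⟩ : ∃ t : ℝ, t = 1 / Λ := ⟨_, rfl⟩
  have ht0 : (0:ℝ) < t := by rw [ht]; positivity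
  have ht1 : t ≤ 1 := by rw [ht, div_le_one hΛ0]; linarith
  have htΛ : t * Λ = 1 := by rw [ht]; field_simp
  have h2Λ : (1:ℝ) / (2 * Λ) = t / 2 := by rw [ht]; field_simp
  constructor
  · -- lower bound: -(4Λ)‖q0‖² is a lower bound for all F p q
    have hlb : ∀ p q, -(4 * Λ) * ‖q0‖ ^ 2 ≤ F p q := by
      intro p q
      obtain ⟨lam, hlam⟩ : ∃ l : ℝ, l = t / 8 := ⟨_, rfl⟩
      have hlamp : (0:ℝ) < lam := by rw [hlam]; positivity
      have hlam0 : (0:ℝ) ≤ lam := hlamp.le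
      have hlam1 : (0:ℝ) ≤ 1 - lam := by rw [hlam]; linarith
      have key := hconv.2 (Set.mem_univ ((0 : EuclideanSpace ℝ (Fin d)), q0))
        (Set.mem_univ (p, q)) hlam1 hlam0 (by ring)
      have hpt : (1 - lam) • ((0 : EuclideanSpace ℝ (Fin d)), q0) + lam • (p, q)
          = (lam • p, (1 - lam) • q0 + lam • q) := by
        have h1 : (1 - lam) • (0 : EuclideanSpace ℝ (Fin d)) + lam • p = lam • p := by
          rw [smul_zero, zero_add]
        simp only [Prod.smul_mk, Prod.mk_add_mk, h1]
      rw [hpt] at key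
      simp only [smul_eq_mul] at key
      rw [hF0, norm_zero, h2Λ] at key
      have hinner := hle (lam • p) ((1 - lam) • q0 + lam • q)
      have e1 : ⟪lam • p, (1 - lam) • q0 + lam • q⟫
          = lam * (1 - lam) * ⟪p, q0⟫ + lam * lam * ⟪p, q⟫ := by
        rw [inner_add_right, real_inner_smul_left, real_inner_smul_left,
          real_inner_smul_right, real_inner_smul_right]; ring
      have e2 : ‖lam • p‖ ^ 2 = lam ^ 2 * ‖p‖ ^ 2 := by
        rw [norm_smul, Real.norm_eq_abs, abs_of_nonneg hlam0]; ring
      have e3 : ‖(1 - lam) • q0 + lam • q‖ ^ 2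
          = (1 - lam) ^ 2 * ‖q0‖ ^ 2 + 2 * ((1 - lam) * lam * ⟪q0, q⟫)
            + lam ^ 2 * ‖q‖ ^ 2 := by
        rw [norm_add_sq_real, real_inner_smul_left, real_inner_smul_right,
          norm_smul, norm_smul, Real.norm_eq_abs, Real.norm_eq_abs,
          abs_of_nonneg hlam0, abs_of_nonneg hlam1]
        ring
      rw [e2, e3] at key
      rw [e1] at hinner
      have hP0 : (0:ℝ) ≤ ‖p‖ ^ 2 := by positivity
      have hQ0 : (0:ℝ) ≤ ‖q‖ ^ 2 := by positivity
      have hR : lam * ((1 - lam) * ⟪p, q0⟫ + lam * ⟪p, q⟫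
          + (t / 2) * ((1 - lam) * (‖p‖ ^ 2 + ‖q‖ ^ 2 + ‖q0‖ ^ 2 - 2 * ⟪q0, q⟫)))
          ≤ lam * F p q := by linarith [key, hinner]
      have hF' : (1 - lam) * ⟪p, q0⟫ + lam * ⟪p, q⟫
          + (t / 2) * ((1 - lam) * (‖p‖ ^ 2 + ‖q‖ ^ 2 + ‖q0‖ ^ 2 - 2 * ⟪q0, q⟫))
          ≤ F p q := le_of_mul_le_mul_left hR hlamp
      have hp0 : (0:ℝ) ≤ ‖p‖ := norm_nonneg _
      have hq0n : (0:ℝ) ≤ ‖q0‖ := norm_nonneg _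
      have hqn : (0:ℝ) ≤ ‖q‖ := norm_nonneg _
      have cs1' : -(‖p‖ * ‖q0‖) ≤ ⟪p, q0⟫ :=
        neg_le_of_abs_le (abs_real_inner_le_norm p q0)
      have cs2' : ⟪q0, q⟫ ≤ ‖q0‖ * ‖q‖ :=
        le_of_abs_le (abs_real_inner_le_norm q0 q)
      have cs3' : -(‖p‖ * ‖q‖) ≤ ⟪p, q⟫ :=
        neg_le_of_abs_le (abs_real_inner_le_norm p q)
      have htΛN : (t * Λ) * ‖q0‖ ^ 2 = ‖q0‖ ^ 2 := by rw [htΛ, one_mul]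
      have hAM1 : ‖p‖ * ‖q0‖ ≤ (t / 8) * ‖p‖ ^ 2 + 2 * Λ * ‖q0‖ ^ 2 := by
        have k1 : t * (‖p‖ * ‖q0‖) ≤ t * ((t / 8) * ‖p‖ ^ 2 + 2 * Λ * ‖q0‖ ^ 2) := by
          linarith [sq_nonneg (t * ‖p‖ - 4 * ‖q0‖), htΛN]
        exact le_of_mul_le_mul_left k1 ht0
      have hAM2 : ‖q0‖ * ‖q‖ ≤ ‖q‖ ^ 2 / 4 + ‖q0‖ ^ 2 := by
        nlinarith [sq_nonneg (‖q‖ - 2 * ‖q0‖)]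
      have hAM3 : ‖p‖ * ‖q‖ ≤ (‖p‖ ^ 2 + ‖q‖ ^ 2) / 2 := by
        nlinarith [sq_nonneg (‖p‖ - ‖q‖)]
      have S1 : -(‖p‖ * ‖q0‖) ≤ (1 - lam) * ⟪p, q0⟫ := by
        nlinarith [mul_nonneg hlam1 (by linarith : (0:ℝ) ≤ ⟪p, q0⟫ + ‖p‖ * ‖q0‖),
          mul_nonneg hlam0 (mul_nonneg hp0 hq0n)]
      have S2 : -(t / 16) * (‖p‖ ^ 2 + ‖q‖ ^ 2) ≤ lam * ⟪p, q⟫ := by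
        have e : (0:ℝ) ≤ lam * (⟪p, q⟫ + ‖p‖ * ‖q‖) :=
          mul_nonneg hlam0 (by linarith)
        have e2 : lam * (‖p‖ * ‖q‖) ≤ lam * ((‖p‖ ^ 2 + ‖q‖ ^ 2) / 2) :=
          mul_le_mul_of_nonneg_left hAM3 hlam0
        rw [hlam] at e e2 ⊢
        linarith [e, e2]
      have S3 : t * ((1 - lam) * ⟪q0, q⟫) ≤ t * (‖q‖ ^ 2 / 4 + ‖q0‖ ^ 2) := by
        have h2 : ⟪q0, q⟫ ≤ ‖q‖ ^ 2 / 4 + ‖q0‖ ^ 2 := le_trans cs2' hAM2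
        have h3 : (0:ℝ) ≤ ‖q‖ ^ 2 / 4 + ‖q0‖ ^ 2 := by positivity
        linarith [mul_nonneg (mul_nonneg ht0.le hlam1)
            (by linarith : (0:ℝ) ≤ ‖q‖ ^ 2 / 4 + ‖q0‖ ^ 2 - ⟪q0, q⟫),
          mul_nonneg (mul_nonneg ht0.le hlam0) h3]
      have hc : (7 / 16) * t * (‖p‖ ^ 2 + ‖q‖ ^ 2 + ‖q0‖ ^ 2)
          ≤ (t / 2) * ((1 - lam) * (‖p‖ ^ 2 + ‖q‖ ^ 2 + ‖q0‖ ^ 2)) := by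
        have h1 : (0:ℝ) ≤ t * (1 - t) := mul_nonneg ht0.le (by linarith)
        have h2 : (0:ℝ) ≤ ‖p‖ ^ 2 + ‖q‖ ^ 2 + ‖q0‖ ^ 2 := by positivity
        rw [hlam]
        linarith [mul_nonneg h1 h2]
      have hd : t * ‖q0‖ ^ 2 ≤ Λ * ‖q0‖ ^ 2 := by
        linarith [mul_nonneg (by linarith : (0:ℝ) ≤ Λ - t) hN]
      linarith [hF', S1, S2, S3, hc, hd, hAM1, mul_nonneg ht0.le hP0,
        mul_nonneg ht0.le hQ0, mul_nonneg ht0.le hN, mul_nonneg hΛ0.le hN]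
    have hmem : -(4 * Λ) * ‖q0‖ ^ 2 ∈ lowerBounds {y : ℝ | ∃ p q, y = F p q} := by
      rintro y ⟨p, q, rfl⟩
      exact hlb p q
    have hlow := hm.2 hmem
    linarith [hlow]
  · -- upper bound
    obtain ⟨s, hs⟩ : ∃ s : ℝ, s = 1 / (2 * Λ) := ⟨_, rfl⟩
    have hs0 : (0:ℝ) < s := by rw [hs]; positivity
    have key := hconc.2 (Set.mem_univ ((s • q0, q0) :
        EuclideanSpace ℝ (Fin d) × EuclideanSpace ℝ (Fin d)))
      (Set.mem_univ ((-s) • q0, q0)) (by norm_num : (0:ℝ) ≤ 1/2)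
      (by norm_num : (0:ℝ) ≤ 1/2) (by norm_num)
    have hpt : (1/2 : ℝ) • ((s • q0, q0) :
        EuclideanSpace ℝ (Fin d) × EuclideanSpace ℝ (Fin d))
        + (1/2 : ℝ) • ((-s) • q0, q0) = (0, q0) := by
      have h1 : (1/2 : ℝ) • (s • q0) + (1/2 : ℝ) • ((-s) • q0)
          = (0 : EuclideanSpace ℝ (Fin d)) := by module
      have h2 : (1/2 : ℝ) • q0 + (1/2 : ℝ) • q0 = q0 := by module
      simp only [Prod.smul_mk, Prod.mk_add_mk, h1, h2]
    rw [hpt] at key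
    simp only [smul_eq_mul] at key
    rw [hF0, norm_zero] at key
    have e1 : ‖s • q0‖ ^ 2 = s ^ 2 * ‖q0‖ ^ 2 := by
      rw [norm_smul, Real.norm_eq_abs, abs_of_pos hs0]; ring
    have e2 : ‖(-s) • q0‖ ^ 2 = s ^ 2 * ‖q0‖ ^ 2 := by
      rw [norm_smul, Real.norm_eq_abs, abs_neg, abs_of_pos hs0]; ring
    have e3 : ⟪s • q0, q0⟫ = s * ‖q0‖ ^ 2 := by
      rw [real_inner_smul_left, real_inner_self_eq_norm_sq]
    have hlow := hle (s • q0) q0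
    rw [e3] at hlow
    have hup : m ≤ F ((-s) • q0) q0 := hm.1 ⟨(-s) • q0, q0, rfl⟩
    rw [e1, e2] at key
    have hΛs2 : Λ * s ^ 2 = s / 2 := by rw [hs]; field_simp
    have h4 : (1 : ℝ) / (4 * Λ) = s / 2 := by rw [hs]; field_simp; ring
    have hFy : F ((-s) • q0) q0 ≤ Λ * s ^ 2 * ‖q0‖ ^ 2 - s * ‖q0‖ ^ 2 := by
      linarith [key, hlow]
    rw [hΛs2] at hFy
    rw [show -(1 / (4 * Λ)) * ‖q0‖ ^ 2 = -(s / 2) * ‖q0‖ ^ 2 by rw [h4]]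
    linarith [hFy, hup]
end

section
/- Let X and Y be bounded random variables on a probability space, with X measurable with respect to a σ-algebra 𝓕_U and Y measurable with respect to 𝓕_V, and suppose that for all events A ∈ 𝓕_U, B ∈ 𝓕_V one has |P[A ∩ B] - P[A]P[B]| ≤ φ. Then |Cov[X,Y]| ≤ 4 ‖X‖_∞ ‖Y‖_∞ φ, where ‖·‖_∞ denotes the essential supremum. -/
/-!
Shifting `X` and `Y` by their bounds `a` and `b` leaves the covariance unchanged, and for
`|x| ≤ a` one has `x + a = ∫_{-a}^{a} 1{s < x} ds`. By Fubini, `Cov[X, Y]` becomes the integral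
over `[-a, a] × [-b, b]` of `P[X > s, Y > t] - P[X > s] P[Y > t]`, and each value of this
integrand is bounded by `φ` because the level sets of `X` and `Y` are `𝓖₁`- and `𝓖₂`-measurable.
-/

open MeasureTheory Set ProbabilityTheory

section LayerCake

variable {α β Ω : Type*} [MeasurableSpace α] [MeasurableSpace β] [MeasurableSpace Ω]

theorem integral_measureReal_prodMk_comm {μ : Measure α} {ν : Measure β} [IsFiniteMeasure μ]
    [IsFiniteMeasure ν] {s : Set (α × β)} (hs : MeasurableSet s) :
    ∫ y, μ.real ((fun x ↦ (x, y)) ⁻¹' s) ∂ν = ∫ x, ν.real (Prod.mk x ⁻¹' s) ∂μ := by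
  simp only [measureReal_def]
  rw [integral_toReal (measurable_measure_prodMk_right hs).aemeasurable
      (ae_of_all _ fun _ ↦ measure_lt_top _ _),
    integral_toReal (measurable_measure_prodMk_left hs).aemeasurable
      (ae_of_all _ fun _ ↦ measure_lt_top _ _),
    ← Measure.prod_apply_symm hs, ← Measure.prod_apply hs]

theorem measureReal_restrict_Ioc_Iio {M x : ℝ} (hx : |x| ≤ M) :
    (volume.restrict (Ioc (-M) M)).real (Iio x) = x + M := by
  rw [abs_le] at hx
  have hIoo : Iio x ∩ Ioc (-M) M = Ioo (-M) x := by
    ext s; simp only [mem_inter_iff, mem_Iio, mem_Ioc, mem_Ioo]; grind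
  rw [measureReal_restrict_apply measurableSet_Iio, hIoo, Real.volume_real_Ioo_of_le (by linarith)]
  ring

theorem integral_add_eq_setIntegral_measureReal_lt {μ : Measure Ω} [IsFiniteMeasure μ]
    {f : Ω → ℝ} {M : ℝ} (hf : Measurable f) (hM : ∀ᵐ ω ∂μ, |f ω| ≤ M) :
    ∫ ω, f ω + M ∂μ = ∫ s in Ioc (-M) M, μ.real {ω | s < f ω} := by
  have hS : MeasurableSet {p : ℝ × Ω | p.1 < f p.2} :=
    measurableSet_lt measurable_fst (hf.comp measurable_snd)
  refine .trans (integral_congr_ae ?_) (integral_measureReal_prodMk_comm hS)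
  filter_upwards [hM] with ω hω
  exact (measureReal_restrict_Ioc_Iio hω).symm

theorem integral_add_mul_add_eq_integral_prod_measureReal_lt {μ : Measure Ω} [IsFiniteMeasure μ]
    {f g : Ω → ℝ} {a b : ℝ} (hf : Measurable f) (hg : Measurable g)
    (ha : ∀ᵐ ω ∂μ, |f ω| ≤ a) (hb : ∀ᵐ ω ∂μ, |g ω| ≤ b) :
    ∫ ω, (f ω + a) * (g ω + b) ∂μ =
      ∫ p, μ.real {ω | p.1 < f ω ∧ p.2 < g ω}
        ∂(volume.restrict (Ioc (-a) a)).prod (volume.restrict (Ioc (-b) b)) := by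
  have hS : MeasurableSet {p : (ℝ × ℝ) × Ω | p.1.1 < f p.2 ∧ p.1.2 < g p.2} :=
    (measurableSet_lt measurable_fst.fst (hf.comp measurable_snd)).inter
      (measurableSet_lt measurable_fst.snd (hg.comp measurable_snd))
  refine .trans (integral_congr_ae ?_) (integral_measureReal_prodMk_comm hS)
  filter_upwards [ha, hb] with ω hfω hgω
  change _ = ((volume.restrict _).prod (volume.restrict _)).real (Iio (f ω) ×ˢ Iio (g ω))
  rw [measureReal_prod_prod, measureReal_restrict_Ioc_Iio hfω, measureReal_restrict_Ioc_Iio hgω]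

end LayerCake

theorem abs_covariance_le_of_abs_measureReal_lt_inter_sub_le {Ω : Type*} {mΩ : MeasurableSpace Ω}
    {P : Measure Ω} [IsProbabilityMeasure P] {X Y : Ω → ℝ} {a b φ : ℝ}
    (hX : Measurable X) (hY : Measurable Y) (ha : ∀ᵐ ω ∂P, |X ω| ≤ a) (hb : ∀ᵐ ω ∂P, |Y ω| ≤ b)
    (hφ : ∀ s t, |P.real ({ω | s < X ω} ∩ {ω | t < Y ω})
      - P.real {ω | s < X ω} * P.real {ω | t < Y ω}| ≤ φ) :
    |cov[X, Y; P]| ≤ 4 * a * b * φ := by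
  obtain ⟨a_nonneg, b_nonneg⟩ : 0 ≤ a ∧ 0 ≤ b := by
    obtain ⟨ω, hXω, hYω⟩ := (ha.and hb).exists
    exact ⟨(abs_nonneg _).trans hXω, (abs_nonneg _).trans hYω⟩
  have hXL2 : MemLp X 2 P := .of_bound hX.aestronglyMeasurable a ha
  have hYL2 : MemLp Y 2 P := .of_bound hY.aestronglyMeasurable b hb
  set ν₁ := volume.restrict (Ioc (-a) a)
  set ν₂ := volume.restrict (Ioc (-b) b)
  have hJoint : Integrable (fun p : ℝ × ℝ ↦ P.real {ω | p.1 < X ω ∧ p.2 < Y ω}) (ν₁.prod ν₂) :=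
    Measure.integrable_measure_prodMk_left
      ((measurableSet_lt measurable_fst.fst (hX.comp measurable_snd)).inter
        (measurableSet_lt measurable_fst.snd (hY.comp measurable_snd))) (measure_ne_top _ _)
  have hMarginal {Z : Ω → ℝ} (hZ : Measurable Z) (ν : Measure ℝ) [IsFiniteMeasure ν] :
      Integrable (fun s ↦ P.real {ω | s < Z ω}) ν :=
    Measure.integrable_measure_prodMk_left
      (measurableSet_lt measurable_fst (hZ.comp measurable_snd)) (measure_ne_top _ _)
  have hcov : cov[X, Y; P] = ∫ p, (P.real {ω | p.1 < X ω ∧ p.2 < Y ω}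
      - P.real {ω | p.1 < X ω} * P.real {ω | p.2 < Y ω}) ∂(ν₁.prod ν₂) := by
    rw [← covariance_add_const_left (hXL2.integrable (by norm_num)) a,
      ← covariance_add_const_right (hYL2.integrable (by norm_num)) b,
      covariance_eq_sub (X := fun ω ↦ X ω + a) (Y := fun ω ↦ Y ω + b)
        (hXL2.add (memLp_const a)) (hYL2.add (memLp_const b)),
      integral_sub hJoint ((hMarginal hX ν₁).mul_prod (hMarginal hY ν₂)),
      integral_prod_mul (fun s ↦ P.real {ω | s < X ω}) (fun t ↦ P.real {ω | t < Y ω}),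
      ← integral_add_eq_setIntegral_measureReal_lt hX ha,
      ← integral_add_eq_setIntegral_measureReal_lt hY hb,
      ← integral_add_mul_add_eq_integral_prod_measureReal_lt hX hY ha hb]
    rfl
  calc |cov[X, Y; P]| ≤ φ * (ν₁.prod ν₂).real univ := by
        rw [hcov, ← Real.norm_eq_abs]
        exact norm_integral_le_of_norm_le_const (ae_of_all _ fun p ↦ hφ p.1 p.2)
    _ = 4 * a * b * φ := by
        rw [← univ_prod_univ, measureReal_prod_prod, measureReal_restrict_apply_univ,
          measureReal_restrict_apply_univ, Real.volume_real_Ioc_of_le (by linarith),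
          Real.volume_real_Ioc_of_le (by linarith)]
        ring

/-- Covariance estimate from the α-mixing condition: if `X` is `𝓖₁`-measurable,
`Y` is `𝓖₂`-measurable, both essentially bounded, and
`|P[A ∩ B] - P[A]P[B]| ≤ φ` for all `A ∈ 𝓖₁`, `B ∈ 𝓖₂`, then
`|Cov[X,Y]| ≤ 4 ‖X‖_∞ ‖Y‖_∞ φ`. -/
theorem stmt13 {Ω : Type*} [m : MeasurableSpace Ω] (P : Measure Ω)
    [IsProbabilityMeasure P]
    (𝓖₁ 𝓖₂ : MeasurableSpace Ω) (h₁ : 𝓖₁ ≤ m) (h₂ : 𝓖₂ ≤ m)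
    (X Y : Ω → ℝ) (hX : Measurable[𝓖₁] X) (hY : Measurable[𝓖₂] Y)
    (MX MY : ℝ) (hMX : ∀ᵐ ω ∂P, |X ω| ≤ MX) (hMY : ∀ᵐ ω ∂P, |Y ω| ≤ MY)
    (φ : ℝ)
    (hmix : ∀ A B : Set Ω, MeasurableSet[𝓖₁] A → MeasurableSet[𝓖₂] B →
      |(P (A ∩ B)).toReal - (P A).toReal * (P B).toReal| ≤ φ) :
    |(∫ ω, X ω * Y ω ∂P) - (∫ ω, X ω ∂P) * ∫ ω, Y ω ∂P| ≤ 4 * MX * MY * φ := by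
  have hXm : Measurable[m] X := hX.mono h₁ le_rfl
  have hYm : Measurable[m] Y := hY.mono h₂ le_rfl
  have hcov := abs_covariance_le_of_abs_measureReal_lt_inter_sub_le hXm hYm hMX hMY
    fun s t ↦ hmix _ _ (hX measurableSet_Ioi) (hY measurableSet_Ioi)
  rwa [covariance_eq_sub (.of_bound hXm.aestronglyMeasurable MX hMX)
    (.of_bound hYm.aestronglyMeasurable MY hMY)] at hcov
end

section
/- Let (X_z)_{z ∈ S} be a finite family of N random variables with values in [0,1], indexed by a set S, such that E[X_{z₁} ⋯ X_{z_{2k}}] ≤ E[X]^j + 4jφ for every 2k-tuple (z₁,...,z_{2k}) with exactly j distinct entries, where all X_z have the same first moment E[X] and φ ∈ [0,1]. Then E[(N^{-1} ∑_{z∈S} X_z)^{2k}] ≤ C(k) ( max{E[X], N^{-1}}^{2k} + φ ) for a constant C(k) depending only on k. -/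
/-!
Expanding the power, the moment is `N^{-2k} ∑_p E[∏ᵢ X_{p i}]` over all tuples `p ∈ S^{2k}`, and
each term is at most `M^{|im p|} + 8kφ` with `M = max(E[X], N⁻¹)`. Since `MN ≥ 1`,
`N^{-2k} M^j ≤ M^{2k} N^{-j}` for `j ≤ 2k`. Grouping the tuples by their image `T ⊆ S`, each group
has at most `(2k)^{2k}` members, so `∑_p N^{-|im p|} ≤ (2k)^{2k} ∑_{T ⊆ S} N^{-|T|}
= (2k)^{2k} (1 + N⁻¹)^N ≤ 3 (2k)^{2k}`.
-/

open MeasureTheory Finset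
open Fintype (piFinset mem_piFinset card_piFinset_const)

section

variable {ι : Type*} [DecidableEq ι]
variable {R : Type*} [CommSemiring R] [PartialOrder R] [IsOrderedRing R]

theorem card_piFinset_filter_image_eq_le (S T : Finset ι) (n : ℕ) :
    #{p ∈ piFinset (fun _ : Fin n => S) | univ.image p = T} ≤ n ^ n := by
  by_cases hT : #T ≤ n
  · calc #{p ∈ piFinset (fun _ : Fin n => S) | univ.image p = T}
        ≤ #(piFinset fun _ : Fin n => T) := by
          refine card_le_card fun p hp => mem_piFinset.mpr fun i => ?_
          rw [← (mem_filter.mp hp).2]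
          exact mem_image_of_mem p (mem_univ i)
      _ = #T ^ n := card_piFinset_const T n
      _ ≤ n ^ n := Nat.pow_le_pow_left hT n
  · rw [card_eq_zero.mpr]
    · exact Nat.zero_le _
    refine filter_false_of_mem fun p _ hpT => hT ?_
    rw [← hpT]
    exact card_image_le.trans_eq (card_fin n)

theorem sum_piFinset_pow_card_image_le (S : Finset ι) (n : ℕ) {x : R} (hx : 0 ≤ x) :
    ∑ p ∈ piFinset (fun _ : Fin n => S), x ^ #(univ.image p)
      ≤ n ^ n * (1 + x) ^ #S := by
  have hmaps : ∀ p ∈ piFinset (fun _ : Fin n => S), univ.image p ∈ S.powerset :=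
    fun p hp => mem_powerset.mpr <| image_subset_iff.mpr fun i _ => mem_piFinset.mp hp i
  rw [← sum_fiberwise_of_maps_to' hmaps (fun T => x ^ #T), add_comm, ← sum_pow_mul_eq_add_pow,
    mul_sum]
  refine sum_le_sum fun T _ => ?_
  rw [sum_const, one_pow, mul_one, nsmul_eq_mul]
  gcongr
  exact_mod_cast Nat.mono_cast (α := R) (card_piFinset_filter_image_eq_le S T n)

theorem pow_mul_pow_le_pow_mul_pow {y M : R} (hy : 0 ≤ y) (hyM : y ≤ M) {j n : ℕ} (hjn : j ≤ n) :
    y ^ n * M ^ j ≤ M ^ n * y ^ j := by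
  rw [← pow_mul_pow_sub y hjn, ← pow_mul_pow_sub M hjn]
  calc y ^ j * y ^ (n - j) * M ^ j = y ^ j * M ^ j * y ^ (n - j) := by ring
    _ ≤ y ^ j * M ^ j * M ^ (n - j) := by have := hy.trans hyM; gcongr
    _ = M ^ j * M ^ (n - j) * y ^ j := by ring

theorem inv_card_pow_mul_sum_pow_card_image_le {S : Finset ι}
    (hS : S.Nonempty) (n : ℕ) {M : ℝ} (hM : (#S : ℝ)⁻¹ ≤ M) :
    (#S : ℝ)⁻¹ ^ n * ∑ p ∈ piFinset (fun _ : Fin n => S), M ^ #(univ.image p)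
      ≤ 3 * n ^ n * M ^ n := by
  have hN : (0 : ℝ) < #S := by exact_mod_cast hS.card_pos
  have hM0 : 0 ≤ M := (inv_pos.mpr hN).le.trans hM
  calc (#S : ℝ)⁻¹ ^ n * ∑ p ∈ piFinset (fun _ : Fin n => S), M ^ #(univ.image p)
      ≤ M ^ n * ∑ p ∈ piFinset (fun _ : Fin n => S), (#S : ℝ)⁻¹ ^ #(univ.image p) := by
        rw [mul_sum, mul_sum]
        exact sum_le_sum fun p _ => pow_mul_pow_le_pow_mul_pow (by positivity) hM
          (card_image_le.trans_eq (card_fin n))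
    _ ≤ M ^ n * (n ^ n * (1 + (#S : ℝ)⁻¹) ^ #S) := by
        gcongr
        exact sum_piFinset_pow_card_image_le S n (by positivity)
    _ ≤ M ^ n * (n ^ n * 3) := by
        gcongr
        exact Real.one_add_inv_pow_le_exp.trans (Real.exp_one_lt_d9.le.trans (by norm_num))
    _ = 3 * n ^ n * M ^ n := by ring

end

theorem integrable_prod_of_mem_Icc {Ω κ : Type*} [MeasurableSpace Ω] {P : Measure Ω}
    [IsFiniteMeasure P] (s : Finset κ) {f : κ → Ω → ℝ} (hf : ∀ i ∈ s, Measurable (f i))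
    (hf01 : ∀ i ∈ s, ∀ ω, f i ω ∈ Set.Icc (0 : ℝ) 1) :
    Integrable (fun ω => ∏ i ∈ s, f i ω) P := by
  refine .of_bound (Finset.measurable_prod s hf).aestronglyMeasurable 1 (.of_forall fun ω => ?_)
  rw [Real.norm_eq_abs, abs_of_nonneg (prod_nonneg fun i hi => (hf01 i hi ω).1)]
  exact prod_le_one (fun i hi => (hf01 i hi ω).1) fun i hi => (hf01 i hi ω).2

theorem integral_mul_sum_pow_eq {Ω ι : Type*} [MeasurableSpace Ω] {P : Measure Ω}
    (S : Finset ι) (X : ι → Ω → ℝ) (c : ℝ) (n : ℕ)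
    (hX : ∀ p ∈ piFinset (fun _ : Fin n => S), Integrable (fun ω => ∏ i, X (p i) ω) P) :
    ∫ ω, (c * ∑ z ∈ S, X z ω) ^ n ∂P
      = c ^ n * ∑ p ∈ piFinset (fun _ : Fin n => S), ∫ ω, ∏ i, X (p i) ω ∂P := by
  simp_rw [mul_pow, sum_pow']
  rw [integral_const_mul, integral_finsetSum _ hX]

theorem stmt15_general (k : ℕ) :
    ∃ C : ℝ, 1 ≤ C ∧
      ∀ (Ω : Type) (_ : MeasurableSpace Ω) (P : Measure Ω),
        IsProbabilityMeasure P →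
        ∀ (ι : Type) (S : Finset ι) (X : ι → Ω → ℝ) (EX φ : ℝ),
          S.Nonempty →
          (∀ z ∈ S, Measurable (X z)) →
          (∀ z ∈ S, ∀ ω, X z ω ∈ Set.Icc (0 : ℝ) 1) →
          (∀ z ∈ S, ∫ ω, X z ω ∂P = EX) →
          0 ≤ φ → φ ≤ 1 →
          (∀ z : Fin (2 * k) → ι, (∀ i, z i ∈ S) →
            ∫ ω, ∏ i, X (z i) ω ∂P ≤
              EX ^ (Set.range z).ncard + 4 * ((Set.range z).ncard : ℝ) * φ) →
          ∫ ω, (((S.card : ℝ))⁻¹ * ∑ z ∈ S, X z ω) ^ (2 * k) ∂P ≤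
            C * ((max EX ((S.card : ℝ))⁻¹) ^ (2 * k) + φ) := by
  classical
  set n := 2 * k
  have hn_pow : (1 : ℝ) ≤ n ^ n := by exact_mod_cast Nat.pow_self_pos
  refine ⟨3 * n ^ n + 4 * n, by linarith [(n.cast_nonneg : (0 : ℝ) ≤ n)], ?_⟩
  intro Ω _ P _ ι S X EX φ hS hX hX01 hEX hφ _ hmoment
  set M := max EX (#S : ℝ)⁻¹
  have hEX0 : 0 ≤ EX := by
    obtain ⟨z₀, hz₀⟩ := hS
    exact hEX z₀ hz₀ ▸ integral_nonneg fun ω => (hX01 z₀ hz₀ ω).1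
  have htuple : ∀ p ∈ piFinset (fun _ : Fin n => S),
      ∫ ω, ∏ i, X (p i) ω ∂P ≤ M ^ #(univ.image p) + 4 * n * φ := by
    intro p hp
    have hp' := mem_piFinset.mp hp
    have hrange : (Set.range p).ncard = #(univ.image p) := by
      rw [← Set.ncard_coe_finset, coe_image, coe_univ, Set.image_univ]
    have hcard : (#(univ.image p) : ℝ) ≤ n := by
      exact_mod_cast card_image_le.trans_eq (card_fin n)
    grw [hmoment p hp', hrange, hcard, le_max_left EX]
  calc ∫ ω, ((#S : ℝ)⁻¹ * ∑ z ∈ S, X z ω) ^ n ∂P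
      = (#S : ℝ)⁻¹ ^ n * ∑ p ∈ piFinset (fun _ : Fin n => S), ∫ ω, ∏ i, X (p i) ω ∂P :=
        integral_mul_sum_pow_eq S X _ n fun p hp => integrable_prod_of_mem_Icc univ
          (fun i _ => hX _ (mem_piFinset.mp hp i))
          (fun i _ => hX01 _ (mem_piFinset.mp hp i))
    _ ≤ (#S : ℝ)⁻¹ ^ n * ∑ p ∈ piFinset (fun _ : Fin n => S),
          (M ^ #(univ.image p) + 4 * n * φ) := by gcongr with p hp; exact htuple p hp
    _ = (#S : ℝ)⁻¹ ^ n * ∑ p ∈ piFinset (fun _ : Fin n => S), M ^ #(univ.image p)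
          + 4 * n * φ := by
        have : (#S : ℝ) ≠ 0 := by exact_mod_cast hS.card_pos.ne'
        rw [sum_add_distrib, sum_const, card_piFinset_const, nsmul_eq_mul,
          Nat.cast_pow, mul_add, inv_pow, inv_mul_cancel_left₀ (pow_ne_zero n this)]
    _ ≤ 3 * n ^ n * M ^ n + 4 * n * φ := by
        grw [inv_card_pow_mul_sum_pow_card_image_le hS n (le_max_right _ _)]
    _ ≤ (3 * n ^ n + 4 * n) * (M ^ n + φ) := by
        have : 0 ≤ M := hEX0.trans (le_max_left _ _)
        nlinarith [pow_nonneg this n]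

/-- Moment bound for averages of `[0,1]`-valued random variables: if
`E[X_{z₁}⋯X_{z_{2k}}] ≤ E[X]^j + 4jφ` for every `2k`-tuple with exactly `j` distinct
entries, then `E[(N⁻¹ ∑_{z∈S} X_z)^{2k}] ≤ C(k)(max{E[X], N⁻¹}^{2k} + φ)`. -/
theorem stmt15 (k : ℕ) (hk : 1 ≤ k) :
    ∃ C : ℝ, 1 ≤ C ∧
      ∀ (Ω : Type) (_ : MeasurableSpace Ω) (P : Measure Ω),
        IsProbabilityMeasure P →
        ∀ (ι : Type) (S : Finset ι) (X : ι → Ω → ℝ) (EX φ : ℝ),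
          S.Nonempty →
          (∀ z ∈ S, Measurable (X z)) →
          (∀ z ∈ S, ∀ ω, X z ω ∈ Set.Icc (0 : ℝ) 1) →
          (∀ z ∈ S, ∫ ω, X z ω ∂P = EX) →
          0 ≤ φ → φ ≤ 1 →
          (∀ z : Fin (2 * k) → ι, (∀ i, z i ∈ S) →
            ∫ ω, ∏ i, X (z i) ω ∂P ≤
              EX ^ (Set.range z).ncard + 4 * ((Set.range z).ncard : ℝ) * φ) →
          ∫ ω, (((S.card : ℝ))⁻¹ * ∑ z ∈ S, X z ω) ^ (2 * k) ∂P ≤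
            C * ((max EX ((S.card : ℝ))⁻¹) ^ (2 * k) + φ) :=
  stmt15_general k
end
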